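/- Let m ≥ 2 be an integer, N = 2m+1, and let A be an honest matrix of order N. Then the (1,4) entry of the (2m-1)-st max-plus power of A equals ε: [A^{⊗(2m-1)}]_{1,4} = ε; in particular A^{⊗(2m-1)} has at least one entry equal to ε. -/
import Mathlib


open Finset

/-- Max-plus matrix product over `ℝ_max = WithBot ℝ` (with `ε = ⊥`, `ε + x = ε`). -/
noncomputable def mpMul {N : ℕ} [NeZero N]
    (A B : Matrix (ZMod N) (ZMod N) (WithBot ℝ)) :
    Matrix (ZMod N) (ZMod N) (WithBot ℝ) :=
  fun i j => Finset.univ.sup fun k => A i k + B k j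

/-- Max-plus identity matrix. -/
noncomputable def mpId {N : ℕ} : Matrix (ZMod N) (ZMod N) (WithBot ℝ) :=
  fun i j => if i = j then (0 : WithBot ℝ) else ⊥

/-- Max-plus matrix power: `mpPow A k = A^{⊗k}` (with `A^{⊗0}` the max-plus identity). -/
noncomputable def mpPow {N : ℕ} [NeZero N]
    (A : Matrix (ZMod N) (ZMod N) (WithBot ℝ)) : ℕ → Matrix (ZMod N) (ZMod N) (WithBot ℝ)
  | 0 => mpId
  | k + 1 => mpMul (mpPow A k) A

/-- `A` is an honest matrix (with `r = 2`): `[A]_{i,j} ≠ ε` exactly when `i ≡ j+1` or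
`i ≡ j+2 (mod N)`; moreover `[A]_{j+1,j} > 0` and `[A]_{j+2,j} < 0` for all `j`. -/
def Honest {N : ℕ} (A : Matrix (ZMod N) (ZMod N) (WithBot ℝ)) : Prop :=
  (∀ i j : ZMod N, A i j ≠ ⊥ ↔ (i = j + 1 ∨ i = j + 2)) ∧
  (∀ j : ZMod N, 0 < A (j + 1) j) ∧
  (∀ j : ZMod N, A (j + 2) j < 0)


lemma key {N : ℕ} [NeZero N] (A : Matrix (ZMod N) (ZMod N) (WithBot ℝ))
    (hA : ∀ i j : ZMod N, A i j ≠ ⊥ → (i = j + 1 ∨ i = j + 2)) :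
    ∀ k (i j : ZMod N), mpPow A k i j ≠ ⊥ →
      ∃ s : ℕ, k ≤ s ∧ s ≤ 2 * k ∧ i = j + (s : ZMod N) := by
  intro k
  induction k with
  | zero =>
    intro i j h
    refine ⟨0, le_rfl, le_rfl, ?_⟩
    simp only [mpPow, mpId] at h
    by_cases hij : i = j
    · simp [hij]
    · simp [hij] at h
  | succ k ih =>
    intro i j h
    simp only [mpPow, mpMul] at h
    have : ∃ l : ZMod N, mpPow A k i l + A l j ≠ ⊥ := by
      by_contra hc
      push_neg at hc
      exact h ((Finset.sup_eq_bot_iff _ _).mpr fun l _ => hc l)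
    obtain ⟨l, hl⟩ := this
    rw [ne_eq, WithBot.add_eq_bot, not_or] at hl
    obtain ⟨h1, h2⟩ := hl
    obtain ⟨s, hs1, hs2, hs3⟩ := ih i l h1
    rcases hA l j h2 with hl1 | hl1
    · refine ⟨s + 1, by omega, by omega, ?_⟩
      rw [hs3, hl1]
      push_cast
      ring
    · refine ⟨s + 2, by omega, by omega, ?_⟩
      rw [hs3, hl1]
      push_cast
      ring

/-- The `(1,4)` entry of the `(2m-1)`-st max-plus power of `A` equals `ε`;
in particular `A^{⊗(2m-1)}` has at least one entry equal to `ε`. -/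
theorem stmt14 (m : ℕ) (hm : 2 ≤ m)
    (A : Matrix (ZMod (2 * m + 1)) (ZMod (2 * m + 1)) (WithBot ℝ)) (hA : Honest A) :
    mpPow A (2 * m - 1) 1 4 = ⊥ ∧
    ∃ i j : ZMod (2 * m + 1), mpPow A (2 * m - 1) i j = ⊥ := by
  have key14 : mpPow A (2 * m - 1) 1 4 = ⊥ := by
    by_contra h
    obtain ⟨s, hs1, hs2, hs3⟩ := key A (fun i j hij => (hA.1 i j).mp hij) (2 * m - 1) 1 4 h
    have h0 : ((s + 3 : ℕ) : ZMod (2 * m + 1)) = 0 := by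
      push_cast
      have : (4 : ZMod (2 * m + 1)) + (s : ZMod (2 * m + 1)) + -(1 : ZMod (2 * m + 1)) = 0 := by
        rw [← hs3]; ring
      linear_combination this
    rw [ZMod.natCast_eq_zero_iff] at h0
    obtain ⟨t, ht⟩ := h0
    rcases Nat.lt_or_ge t 2 with h2 | h2
    · interval_cases t <;> omega
    · have : (2 * m + 1) * 2 ≤ (2 * m + 1) * t := Nat.mul_le_mul_left _ h2
      omega
  exact ⟨key14, 1, 4, key14⟩
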